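/- For all natural numbers m, n, the polynomial identity 1 - x^(m+1) * ∑_{k=0}^{n} C(m+k, k) (1-x)^k = (1-x)^(n+1) * ∑_{k=0}^{m} C(n+k, k) x^k holds in ℤ[x]. -/

import Mathlib

/-! Both sides are polynomial expressions in `x` and `y = 1 - x`, and the identity is the
symmetric statement `x ^ (m + 1) * A + y ^ (n + 1) * B = 1`, valid in every commutative ring
(probabilistically: of `m + n + 1` Bernoulli trials, either `m + 1` successes come before
`n + 1` failures or the other way round). For `n = 0` it is the geometric sum; raising `n` by
one changes the first summand by `C(m + n + 1, n + 1) x ^ (m + 1) y ^ (n + 1)`, and a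
Pascal-rule telescoping shows that the second summand changes by exactly the opposite amount. -/

open Finset

section CommRing

variable {R : Type*} [CommRing R]

theorem one_sub_mul_sum_range_choose_mul_pow (x : R) (m n : ℕ) :
    (1 - x) * ∑ k ∈ range (m + 1), ((n + 1 + k).choose k : R) * x ^ k
      = ∑ k ∈ range (m + 1), ((n + k).choose k : R) * x ^ k
        - ((n + 1 + m).choose m : R) * x ^ (m + 1) := by
  induction m with
  | zero => simp
  | succ m ih =>
    have pascal : (n + 1 + (m + 1)).choose (m + 1)
        = (n + 1 + m).choose m + (n + (m + 1)).choose (m + 1) := by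
      rw [show n + 1 + (m + 1) = n + 1 + m + 1 by omega, Nat.choose_succ_succ',
        show n + 1 + m = n + (m + 1) by omega]
    rw [sum_range_succ _ (m + 1), sum_range_succ _ (m + 1), mul_add, ih, pascal]
    push_cast
    ring

theorem chaundy_bullard (x : R) (m n : ℕ) :
    x ^ (m + 1) * ∑ k ∈ range (n + 1), ((m + k).choose k : R) * (1 - x) ^ k
      + (1 - x) ^ (n + 1) * ∑ k ∈ range (m + 1), ((n + k).choose k : R) * x ^ k = 1 := by
  induction n with
  | zero =>
    simp only [zero_add, Nat.choose_zero_right, Nat.choose_self, Nat.cast_one, one_mul, pow_zero,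
      sum_range_one, mul_one, pow_one]
    linear_combination mul_neg_geom_sum x (m + 1)
  | succ n ih =>
    rw [sum_range_succ, show (m + (n + 1)).choose (n + 1) = (n + 1 + m).choose m by
      rw [add_comm m, Nat.choose_symm_add]]
    linear_combination ih + (1 - x) ^ (n + 1) * one_sub_mul_sum_range_choose_mul_pow x m n

end CommRing

open Polynomial in
theorem chaundy_bullard_int_poly (m n : ℕ) :
    (1 : ℤ[X]) - X ^ (m + 1) * ∑ k ∈ Finset.range (n + 1), C ((m + k).choose k : ℤ) * (1 - X) ^ k
      = (1 - X) ^ (n + 1) * ∑ k ∈ Finset.range (m + 1), C ((n + k).choose k : ℤ) * X ^ k := by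
  simp only [Int.cast_natCast, eq_intCast]
  linear_combination -chaundy_bullard (X : ℤ[X]) m n
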